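/- arXiv:1910.08729 — 4 statements merged into one kernel-verified Lean document; each statement's English description precedes it below -/
import Mathlib

section
/- Let A be a real 2×2 matrix and b ∈ ℝ² with a12 ≠ 0, det A ≠ 0 and a12 b2 − a22 b1 ≠ 0, and let (x(t), y(t))ᵀ be the solution of ż = Az + b with initial value (0, −b1/a12)ᵀ. If there exists t0 ≠ 0 with x(t0) = 0 and y(t0) = −b1/a12, then the eigenvalues of A are purely imaginary (i.e., tr A = 0 and det A > 0), so the unique equilibrium is a center. -/
/-!
In the coordinates `u = det A · x - (a12 b2 - a22 b1)` and `w = ẋ` the system becomes the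
companion system `u̇ = D w`, `ẇ = T w - u` with `T = tr A`, `D = det A`, and the tangency point
becomes `(u, w) = (-(a12 b2 - a22 b1), 0) ≠ 0`. A return to it between times `a < b` is ruled
out by Lyapunov functions: if `T ≠ 0` then `T D (u² + D w²)` has derivative `2 (T D w)² ≥ 0`,
and if `T = 0`, `D ≤ 0` then `-u w` has derivative `u² - D w² ≥ 0`. Both take equal values at
`a` and `b`, so their derivatives vanish on `(a, b)`, which forces `u ≡ 0` there and hence
`u a = 0`.
-/

open Set

lemma HasDerivAt.eq_zero_of_forall_Ioo_eq {f : ℝ → ℝ} {f' c a b t : ℝ}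
    (hf : HasDerivAt f f' t) (hc : ∀ s ∈ Ioo a b, f s = c) (ht : t ∈ Ioo a b) : f' = 0 :=
  hf.unique <| (hasDerivAt_const t c).congr_of_eventuallyEq <|
    Filter.eventually_of_mem (Ioo_mem_nhds ht.1 ht.2) hc

lemma Continuous.apply_left_eq_of_forall_Ioo_eq {f : ℝ → ℝ} {a b c : ℝ} (hf : Continuous f)
    (hab : a < b) (hc : ∀ s ∈ Ioo a b, f s = c) : f a = c :=
  EqOn.of_subset_closure hc hf.continuousOn continuousOn_const Ioo_subset_Icc_self
    (closure_Ioo hab.ne).ge (left_mem_Icc.mpr hab.le)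

lemma hasDerivAt_nonneg_eq_zero_of_apply_eq {f f' : ℝ → ℝ} {a b : ℝ}
    (hf : ∀ t, HasDerivAt f (f' t) t) (hf' : ∀ t, 0 ≤ f' t) (hab : f a = f b) :
    ∀ t ∈ Ioo a b, f' t = 0 := by
  have hmono : Monotone f := monotone_of_hasDerivAt_nonneg hf hf'
  have hconst : ∀ s ∈ Ioo a b, f s = f a := fun s hs =>
    le_antisymm (hab ▸ hmono hs.2.le) (hmono hs.1.le)
  exact fun t ht => (hf t).eq_zero_of_forall_Ioo_eq hconst ht

section Companion

variable {T D a b : ℝ} {u w : ℝ → ℝ}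

lemma companion_trace_eq_zero (hu : ∀ t, HasDerivAt u (D * w t) t)
    (hw : ∀ t, HasDerivAt w (T * w t - u t) t) (hD : D ≠ 0) (hab : a < b)
    (hwa : w a = 0) (hwb : w b = 0) (hu_eq : u a = u b) (hua : u a ≠ 0) : T = 0 := by
  by_contra hT
  have hF : ∀ t, HasDerivAt (fun t => T * D * (u t ^ 2 + D * w t ^ 2))
      (2 * (T * D * w t) ^ 2) t := fun t =>
    ((((hu t).pow 2).add (((hw t).pow 2).const_mul D)).const_mul (T * D)).congr_deriv
      (by ring)
  have hFab : T * D * (u a ^ 2 + D * w a ^ 2) = T * D * (u b ^ 2 + D * w b ^ 2) := by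
    rw [hwa, hwb, hu_eq]
  have hw_zero : ∀ s ∈ Ioo a b, w s = 0 := fun s hs => by
    have h := hasDerivAt_nonneg_eq_zero_of_apply_eq hF (fun t => by positivity) hFab s hs
    simpa [hT, hD] using h
  have hu_zero : ∀ s ∈ Ioo a b, u s = 0 := fun s hs => by
    have h := (hw s).eq_zero_of_forall_Ioo_eq hw_zero hs
    rw [hw_zero s hs] at h
    linarith
  exact hua <| (continuous_iff_continuousAt.mpr fun t => (hu t).continuousAt)
    |>.apply_left_eq_of_forall_Ioo_eq hab hu_zero

lemma companion_det_pos (hu : ∀ t, HasDerivAt u (D * w t) t)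
    (hw : ∀ t, HasDerivAt w (-u t) t) (hab : a < b)
    (hwa : w a = 0) (hwb : w b = 0) (hua : u a ≠ 0) : 0 < D := by
  by_contra! hD
  have hH : ∀ t, HasDerivAt (fun t => -(u t * w t)) (u t ^ 2 - D * w t ^ 2) t := fun t =>
    ((hu t).mul (hw t)).neg.congr_deriv (by ring)
  have hH' : ∀ t, 0 ≤ u t ^ 2 - D * w t ^ 2 := fun t => by
    nlinarith [sq_nonneg (u t), sq_nonneg (w t)]
  have hHab : -(u a * w a) = -(u b * w b) := by rw [hwa, hwb, mul_zero, mul_zero]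
  have hu_zero : ∀ s ∈ Ioo a b, u s = 0 := fun s hs => by
    have h := hasDerivAt_nonneg_eq_zero_of_apply_eq hH hH' hHab s hs
    nlinarith [sq_nonneg (u s), sq_nonneg (w s)]
  exact hua <| (continuous_iff_continuousAt.mpr fun t => (hu t).continuousAt)
    |>.apply_left_eq_of_forall_Ioo_eq hab hu_zero

lemma companion_center_of_return (hu : ∀ t, HasDerivAt u (D * w t) t)
    (hw : ∀ t, HasDerivAt w (T * w t - u t) t) (hD : D ≠ 0) (hab : a ≠ b)
    (hwa : w a = 0) (hwb : w b = 0) (hu_eq : u a = u b) (hua : u a ≠ 0) :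
    T = 0 ∧ 0 < D := by
  wlog hlt : a < b generalizing a b
  · exact this hab.symm hwb hwa hu_eq.symm (hu_eq ▸ hua) (hab.lt_or_gt.resolve_left hlt)
  have hT := companion_trace_eq_zero hu hw hD hlt hwa hwb hu_eq hua
  refine ⟨hT, companion_det_pos hu (fun t => (hw t).congr_deriv ?_) hlt hwa hwb hua⟩
  rw [hT, zero_mul, zero_sub]

end Companion

/-- If the solution of `ż = Az + b` starting at the tangency point `(0, -b1/a12)` with the
y-axis returns to the tangency point at some time `t0 ≠ 0`, then the eigenvalues of `A` are
purely imaginary: `tr A = 0` and `det A > 0` (the equilibrium is a center). -/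
theorem stmt_1 (a11 a12 a21 a22 b1 b2 : ℝ) (h12 : a12 ≠ 0)
    (hdet : a11 * a22 - a12 * a21 ≠ 0) (hB : a12 * b2 - a22 * b1 ≠ 0)
    (x y : ℝ → ℝ)
    (hx : ∀ t : ℝ, HasDerivAt x (a11 * x t + a12 * y t + b1) t)
    (hy : ∀ t : ℝ, HasDerivAt y (a21 * x t + a22 * y t + b2) t)
    (hx0 : x 0 = 0) (hy0 : y 0 = -b1 / a12)
    (hret : ∃ t0 : ℝ, t0 ≠ 0 ∧ x t0 = 0 ∧ y t0 = -b1 / a12) :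
    a11 + a22 = 0 ∧ 0 < a11 * a22 - a12 * a21 := by
  obtain ⟨t0, ht0, hxt0, hyt0⟩ := hret
  set D := a11 * a22 - a12 * a21
  set B := a12 * b2 - a22 * b1
  have hu : ∀ t, HasDerivAt (fun t => D * x t - B) (D * (a11 * x t + a12 * y t + b1)) t :=
    fun t => ((hx t).const_mul D).sub_const B
  have hw : ∀ t, HasDerivAt (fun t => a11 * x t + a12 * y t + b1)
      ((a11 + a22) * (a11 * x t + a12 * y t + b1) - (D * x t - B)) t := fun t =>
    ((((hx t).const_mul a11).add ((hy t).const_mul a12)).add_const b1).congr_deriv (by ring)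
  have htangent : a11 * 0 + a12 * (-b1 / a12) + b1 = 0 := by field_simp; ring
  refine companion_center_of_return hu hw hdet ht0 ?_ ?_ ?_ ?_
  · simpa only [hxt0, hyt0] using htangent
  · simpa only [hx0, hy0] using htangent
  · simp only [hxt0, hx0]
  · simpa only [hxt0, mul_zero, zero_sub, neg_ne_zero] using hB
end

section
/- Let A be a real 2×2 matrix and b ∈ ℝ² with a12 ≠ 0, det A ≠ 0 and a12 b2 − a22 b1 ≠ 0, and let (x(t), y(t))ᵀ be the solution of ż = Az + b with initial value (0, −b1/a12)ᵀ. If there exists t0 > 0 with x(t0) = 0 and y(t0) ≠ −b1/a12, then A has complex (non-real) eigenvalues with positive real part, i.e., (tr A)² < 4 det A and tr A > 0, so the equilibrium is an unstable focus. -/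
/-!
With `u = x` and `v = ẋ` the system becomes `u' = v`, `v' = τ v - δ u + c`, where `τ = tr A`,
`δ = det A` and `c = a12 b2 - a22 b1`; the orbit leaves `u = 0` with `v = 0` and returns to
`u = 0` with `v ≠ 0`.

The energy `v² + δ u² - 2 c u` has derivative `2 τ v²`, so for `τ ≤ 0` it could not grow between
the two visits of `u = 0`, while it grows by `v(t₀)² > 0`. Hence `τ > 0`.

If `λ, μ` were real roots of `z² - τ z + δ`, then `h = v' - λ v` solves `h' = μ h` with
`h(0) = c ≠ 0`, so `h` never vanishes; but `v e^{-λ t}` has derivative `h e^{-λ t}` and vanishes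
at `0` and, by Rolle applied to `u`, somewhere in `(0, t₀)`. Hence `τ² < 4 δ`.
-/

open Real Set

theorem ne_zero_of_hasDerivAt_mul_self {f : ℝ → ℝ} {μ : ℝ} (hf : ∀ t, HasDerivAt f (μ * f t) t)
    (h0 : f 0 ≠ 0) (t : ℝ) : f t ≠ 0 := by
  have hconst : ∀ s, HasDerivAt (fun t => f t * exp (-(μ * t))) 0 s := fun s =>
    ((hf s).mul ((hasDerivAt_id s).const_mul μ).neg.exp).congr_deriv (by simp only [id]; ring)
  have key := is_const_of_deriv_eq_zero (fun s => (hconst s).differentiableAt)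
    (fun s => (hconst s).deriv) t 0
  simp only [mul_zero, neg_zero, exp_zero, mul_one] at key
  intro ht
  rw [ht, zero_mul] at key
  exact h0 key.symm

section SecondOrder

variable {τ δ c : ℝ} {u v : ℝ → ℝ}
  (hu : ∀ t, HasDerivAt u (v t) t) (hv : ∀ t, HasDerivAt v (τ * v t - δ * u t + c) t)
include hu hv

theorem hasDerivAt_energy (t : ℝ) :
    HasDerivAt (fun t => v t ^ 2 + δ * u t ^ 2 - 2 * c * u t) (2 * τ * v t ^ 2) t :=
  ((((hv t).pow 2).add (((hu t).pow 2).const_mul δ)).sub ((hu t).const_mul (2 * c))).congr_deriv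
    (by simp only [Nat.cast_ofNat]; ring)

theorem trace_pos_of_return {t₀ : ℝ} (ht₀ : 0 ≤ t₀) (hret : u t₀ = u 0)
    (hgrow : v 0 ^ 2 < v t₀ ^ 2) : 0 < τ := by
  by_contra! hτ
  have hanti : Antitone fun t => v t ^ 2 + δ * u t ^ 2 - 2 * c * u t :=
    antitone_of_deriv_nonpos (fun t => (hasDerivAt_energy hu hv t).differentiableAt) fun t => by
      rw [(hasDerivAt_energy hu hv t).deriv]
      nlinarith [sq_nonneg (v t)]
  have := hanti ht₀
  simp only [hret] at this
  linarith

theorem false_of_return_of_real_roots {t₀ lam mu : ℝ} (hsum : lam + mu = τ)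
    (hprod : lam * mu = δ) (hv0 : v 0 = 0) (hne : δ * u 0 ≠ c) (ht₀ : 0 < t₀)
    (hret : u t₀ = u 0) : False := by
  obtain ⟨s, hs, hvs⟩ := exists_hasDerivAt_eq_zero ht₀
    (fun t _ => (hu t).continuousAt.continuousWithinAt) hret.symm fun t _ => hu t
  set h : ℝ → ℝ := fun t => mu * v t - δ * u t + c
  have hh : ∀ t, HasDerivAt h (mu * h t) t := fun t =>
    ((((hv t).const_mul mu).sub ((hu t).const_mul δ)).add_const c).congr_deriv
      (by simp only [h, ← hsum, ← hprod]; ring)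
  have hh0 : h 0 ≠ 0 := by
    simp only [h, hv0, mul_zero, zero_sub]
    exact fun h0 => hne (by linarith)
  -- `v' - lam * v = h` because `mu` is the other root
  have hg : ∀ t, HasDerivAt (fun t => v t * exp (-(lam * t))) (h t * exp (-(lam * t))) t :=
    fun t => ((hv t).mul ((hasDerivAt_id t).const_mul lam).neg.exp).congr_deriv
      (by simp only [h, id, Pi.neg_apply, ← hsum]; ring)
  obtain ⟨r, -, hr⟩ := exists_hasDerivAt_eq_zero hs.1
    (fun t _ => (hg t).continuousAt.continuousWithinAt) (by simp [hv0, hvs]) fun t _ => hg t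
  exact mul_ne_zero (ne_zero_of_hasDerivAt_mul_self hh hh0 r) (exp_pos _).ne' hr

theorem sq_lt_of_return {t₀ : ℝ} (hv0 : v 0 = 0) (hne : δ * u 0 ≠ c) (ht₀ : 0 < t₀)
    (hret : u t₀ = u 0) : τ ^ 2 < 4 * δ := by
  by_contra! hdisc
  have hroot := sq_sqrt (sub_nonneg.2 hdisc)
  exact false_of_return_of_real_roots (lam := (τ + √(τ ^ 2 - 4 * δ)) / 2)
    (mu := (τ - √(τ ^ 2 - 4 * δ)) / 2) hu hv (by ring)
    (by linear_combination (-1 / 4 : ℝ) * hroot) hv0 hne ht₀ hret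

end SecondOrder

theorem stmt_2_general (a11 a12 a21 a22 b1 b2 : ℝ) (h12 : a12 ≠ 0)
    (hB : a12 * b2 - a22 * b1 ≠ 0)
    (x y : ℝ → ℝ)
    (hx : ∀ t : ℝ, HasDerivAt x (a11 * x t + a12 * y t + b1) t)
    (hy : ∀ t : ℝ, HasDerivAt y (a21 * x t + a22 * y t + b2) t)
    (hx0 : x 0 = 0) (hy0 : y 0 = -b1 / a12)
    (hret : ∃ t0 : ℝ, 0 < t0 ∧ x t0 = 0 ∧ y t0 ≠ -b1 / a12) :
    (a11 + a22) ^ 2 < 4 * (a11 * a22 - a12 * a21) ∧ 0 < a11 + a22 := by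
  obtain ⟨t0, ht0, hxt0, hyt0⟩ := hret
  set v : ℝ → ℝ := fun t => a11 * x t + a12 * y t + b1
  have hv : ∀ t, HasDerivAt v ((a11 + a22) * v t - (a11 * a22 - a12 * a21) * x t
      + (a12 * b2 - a22 * b1)) t := fun t =>
    ((((hx t).const_mul a11).add ((hy t).const_mul a12)).add_const b1).congr_deriv (by ring)
  have hv0 : v 0 = 0 := by simp only [v, hx0, hy0]; field_simp; ring
  have hvt0 : v t0 ≠ 0 := fun h => hyt0 <| by
    simp only [v, hxt0] at h
    field_simp
    linarith
  have hret : x t0 = x 0 := hxt0.trans hx0.symm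
  have hgrow : v 0 ^ 2 < v t0 ^ 2 := by rw [hv0, zero_pow two_ne_zero]; positivity
  exact ⟨sq_lt_of_return hx hv hv0 (by simpa [hx0] using hB.symm) ht0 hret,
    trace_pos_of_return hx hv ht0.le hret hgrow⟩

/-- If the solution of `ż = Az + b` starting at the tangency point `(0, -b1/a12)` reaches the
y-axis at a time `t0 > 0` at a point different from the tangency point, then `A` has
non-real eigenvalues with positive real part: `(tr A)² < 4 det A` and `tr A > 0`
(the equilibrium is an unstable focus). -/
theorem stmt_2 (a11 a12 a21 a22 b1 b2 : ℝ) (h12 : a12 ≠ 0)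
    (hdet : a11 * a22 - a12 * a21 ≠ 0) (hB : a12 * b2 - a22 * b1 ≠ 0)
    (x y : ℝ → ℝ)
    (hx : ∀ t : ℝ, HasDerivAt x (a11 * x t + a12 * y t + b1) t)
    (hy : ∀ t : ℝ, HasDerivAt y (a21 * x t + a22 * y t + b2) t)
    (hx0 : x 0 = 0) (hy0 : y 0 = -b1 / a12)
    (hret : ∃ t0 : ℝ, 0 < t0 ∧ x t0 = 0 ∧ y t0 ≠ -b1 / a12) :
    (a11 + a22) ^ 2 < 4 * (a11 * a22 - a12 * a21) ∧ 0 < a11 + a22 :=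
  stmt_2_general a11 a12 a21 a22 b1 b2 h12 hB x y hx hy hx0 hy0 hret
end

section
/- Let α > 0 and define ψ₊(t) = 1 − e^{αt}(cos t − α sin t). Then there exists a unique t̂ ∈ (π, 2π) with ψ₊(t̂) = 0; moreover ψ₊(t) > 0 for t ∈ (π, t̂) and ψ₊(π) = 1 + e^{απ} > 0, ψ₊(2π) = 1 − e^{2απ} < 0. -/
/-!
Since `ψ₊'(t) = (1 + α²) e^{αt} sin t`, the function `ψ₊` is strictly decreasing on `[π, 2π]`.
It is positive at `π` and negative at `2π`, so it has exactly one zero there, by the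
intermediate value theorem and injectivity.
-/

open Real Set

theorem StrictAntiOn.exists_unique_zero_Ioo {f : ℝ → ℝ} {a b : ℝ} (hab : a ≤ b)
    (hcont : ContinuousOn f (Icc a b)) (hanti : StrictAntiOn f (Icc a b))
    (ha : 0 < f a) (hb : f b < 0) :
    ∃ c ∈ Ioo a b, f c = 0 ∧ (∀ t ∈ Ioo a b, f t = 0 → t = c) ∧
      ∀ t ∈ Ioo a c, 0 < f t := by
  obtain ⟨c, hc, hfc⟩ := intermediate_value_Ioo' hab hcont ⟨hb, ha⟩
  refine ⟨c, hc, hfc, fun t ht hft => ?_, fun t ht => ?_⟩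
  · exact hanti.injOn (Ioo_subset_Icc_self ht) (Ioo_subset_Icc_self hc) (hft.trans hfc.symm)
  · have ht' : t ∈ Icc a b := ⟨ht.1.le, (ht.2.trans hc.2).le⟩
    simpa [hfc] using hanti ht' (Ioo_subset_Icc_self hc) ht.2

/-- The function `ψ₊` of the switching-line analysis. -/
noncomputable def psiPlus (α t : ℝ) : ℝ := 1 - exp (α * t) * (cos t - α * sin t)

theorem hasDerivAt_psiPlus (α t : ℝ) :
    HasDerivAt (psiPlus α) (exp (α * t) * (1 + α ^ 2) * sin t) t := by
  have hexp : HasDerivAt (fun t => exp (α * t)) (exp (α * t) * α) t := by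
    simpa using ((hasDerivAt_id t).const_mul α).exp
  have htrig : HasDerivAt (fun t => cos t - α * sin t) (-sin t - α * cos t) t :=
    (hasDerivAt_cos t).sub ((hasDerivAt_sin t).const_mul α)
  exact ((hexp.mul htrig).const_sub 1).congr_deriv (by ring)

theorem continuous_psiPlus (α : ℝ) : Continuous (psiPlus α) :=
  continuous_iff_continuousAt.2 fun t => (hasDerivAt_psiPlus α t).continuousAt

theorem strictAntiOn_psiPlus (α : ℝ) : StrictAntiOn (psiPlus α) (Icc π (2 * π)) := by
  refine strictAntiOn_of_deriv_neg (convex_Icc _ _) (continuous_psiPlus α).continuousOn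
    fun t ht => ?_
  rw [interior_Icc] at ht
  rw [(hasDerivAt_psiPlus α t).deriv]
  have hsin : sin t < 0 := by
    have := sin_pos_of_pos_of_lt_pi (x := t - π) (by linarith [ht.1]) (by linarith [ht.2])
    rw [sin_sub_pi] at this
    linarith
  exact mul_neg_of_pos_of_neg (by positivity) hsin

theorem psiPlus_pi (α : ℝ) : psiPlus α π = 1 + exp (α * π) := by
  simp [psiPlus]

theorem psiPlus_two_pi (α : ℝ) : psiPlus α (2 * π) = 1 - exp (2 * α * π) := by
  simp only [psiPlus, cos_two_pi, sin_two_pi]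
  ring_nf

theorem one_sub_exp_two_mul_pi_neg {α : ℝ} (hα : 0 < α) : 1 - exp (2 * α * π) < 0 := by
  have := one_lt_exp_iff.2 (by positivity : 0 < 2 * α * π)
  linarith

/-- For `α > 0`, the function `ψ₊(t) = 1 - e^{αt}(cos t - α sin t)` has a unique zero
`t̂ ∈ (π, 2π)`; it is positive on `(π, t̂)`, with `ψ₊(π) = 1 + e^{απ} > 0` and
`ψ₊(2π) = 1 - e^{2απ} < 0`. -/
theorem stmt_6 (α : ℝ) (hα : 0 < α) :
    ∃ th : ℝ, th ∈ Set.Ioo π (2 * π) ∧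
      1 - Real.exp (α * th) * (Real.cos th - α * Real.sin th) = 0 ∧
      (∀ t ∈ Set.Ioo π (2 * π),
        1 - Real.exp (α * t) * (Real.cos t - α * Real.sin t) = 0 → t = th) ∧
      (∀ t ∈ Set.Ioo π th,
        0 < 1 - Real.exp (α * t) * (Real.cos t - α * Real.sin t)) ∧
      1 - Real.exp (α * π) * (Real.cos π - α * Real.sin π) = 1 + Real.exp (α * π) ∧
      0 < 1 + Real.exp (α * π) ∧
      1 - Real.exp (α * (2 * π)) * (Real.cos (2 * π) - α * Real.sin (2 * π))
        = 1 - Real.exp (2 * α * π) ∧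
      1 - Real.exp (2 * α * π) < 0 := by
  have hpi_pos : 0 < psiPlus α π := by rw [psiPlus_pi]; positivity
  have htwo_pi_neg : psiPlus α (2 * π) < 0 := by
    rw [psiPlus_two_pi]; exact one_sub_exp_two_mul_pi_neg hα
  obtain ⟨th, hth, hzero, hunique, hpos⟩ :=
    (strictAntiOn_psiPlus α).exists_unique_zero_Ioo (by linarith [pi_pos])
      (continuous_psiPlus α).continuousOn hpi_pos htwo_pi_neg
  exact ⟨th, hth, hzero, hunique, hpos, psiPlus_pi α, by positivity, psiPlus_two_pi α,
    one_sub_exp_two_mul_pi_neg hα⟩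
end

section
/- Let γ₃ > 0, ν > 0, and consider the left half-return data: for t ∈ (π/ν, t̂⁻) define φ±(t) = 1 − e^{±γ₃t}(cos(νt) ∓ (γ₃/ν) sin(νt)), and let K ≠ 0 be a real constant. Define y(t) = −η + K·φ₋(t) e^{γ₃t}/sin(νt) and Q(t) = −η − K·φ₊(t) e^{−γ₃t}/sin(νt). Then the ratio of derivatives satisfies Q'(t)/y'(t) = ((y(t) + η)/(Q(t) + η)) · e^{−2γ₃ t} for all t ∈ (π/ν, t̂⁻) with sin(νt) ≠ 0 and Q(t) ≠ −η. -/
open Real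

noncomputable def phiPlus (γ ν t : ℝ) : ℝ :=
  1 - Real.exp (γ * t) * (Real.cos (ν * t) - (γ / ν) * Real.sin (ν * t))

noncomputable def phiMinus (γ ν t : ℝ) : ℝ :=
  1 - Real.exp (-(γ * t)) * (Real.cos (ν * t) + (γ / ν) * Real.sin (ν * t))

/-- Arrival height of the inverse left half-return map, parametrized by time. -/
noncomputable def yL (γ ν η K t : ℝ) : ℝ :=
  -η + K * phiMinus γ ν t * Real.exp (γ * t) / Real.sin (ν * t)

/-- Starting height of the inverse left half-return map, parametrized by time. -/
noncomputable def QL (γ ν η K t : ℝ) : ℝ :=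
  -η - K * phiPlus γ ν t * Real.exp (-(γ * t)) / Real.sin (ν * t)

/-!
Replacing `(γ, K)` by `(-γ, -K)` turns `yL` into `QL` (it swaps `φ₊` and `φ₋`), so a single
quotient-rule computation gives both derivatives: `y' = K ν φ₊ / sin² (νt)` and
`Q' = -K ν φ₋ / sin² (νt)`. Hence `Q'/y' = -φ₋/φ₊`, and the right-hand side reduces to the same
quotient because `y + η` and `Q + η` carry the factors `e^{γt}` and `e^{-γt}`.
-/

lemma phiMinus_eq_phiPlus_neg (γ ν t : ℝ) : phiMinus γ ν t = phiPlus (-γ) ν t := by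
  simp only [phiMinus, phiPlus]
  ring_nf

lemma QL_eq_yL_neg (γ ν η K : ℝ) : QL γ ν η K = yL (-γ) ν η (-K) := by
  ext t
  simp only [QL, yL, phiMinus_eq_phiPlus_neg, neg_neg]
  ring_nf

lemma yL_eq (γ ν η K t : ℝ) :
    yL γ ν η K t = -η + K * (exp (γ * t) - (cos (ν * t) + γ / ν * sin (ν * t))) / sin (ν * t) := by
  simp only [yL, phiMinus, exp_neg]
  field_simp

lemma hasDerivAt_yL (γ ν η K t : ℝ) (hs : sin (ν * t) ≠ 0) :
    HasDerivAt (yL γ ν η K) (K * ν * phiPlus γ ν t / sin (ν * t) ^ 2) t := by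
  have hν : ν ≠ 0 := by rintro rfl; simp at hs
  have hlin : ∀ c : ℝ, HasDerivAt (fun t => c * t) c t := fun c => by
    simpa using (hasDerivAt_id t).const_mul c
  have hsin := (hlin ν).sin
  have hnum : HasDerivAt (fun t => K * (exp (γ * t) - (cos (ν * t) + γ / ν * sin (ν * t))))
      (K * (exp (γ * t) * γ - (-sin (ν * t) * ν + γ / ν * (cos (ν * t) * ν)))) t :=
    ((hlin γ).exp.sub ((hlin ν).cos.add (hsin.const_mul (γ / ν)))).const_mul K
  rw [show yL γ ν η K = _ from funext (yL_eq γ ν η K)]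
  refine ((hnum.div hsin hs).const_add (-η)).congr_deriv ?_
  have hpyth := sin_sq_add_cos_sq (ν * t)
  simp only [phiPlus]
  generalize sin (ν * t) = s at *
  generalize cos (ν * t) = c at *
  field_simp
  linear_combination K * ν * hpyth

lemma hasDerivAt_QL (γ ν η K t : ℝ) (hs : sin (ν * t) ≠ 0) :
    HasDerivAt (QL γ ν η K) (-(K * ν * phiMinus γ ν t) / sin (ν * t) ^ 2) t := by
  rw [QL_eq_yL_neg, phiMinus_eq_phiPlus_neg]
  convert hasDerivAt_yL (-γ) ν η (-K) t hs using 1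
  ring

lemma deriv_QL_div_deriv_yL (γ ν η K t : ℝ) (hs : sin (ν * t) ≠ 0) (hK : K ≠ 0)
    (hφ : phiPlus γ ν t ≠ 0) :
    deriv (QL γ ν η K) t / deriv (yL γ ν η K) t = -(phiMinus γ ν t / phiPlus γ ν t) := by
  have hν : ν ≠ 0 := by rintro rfl; simp at hs
  rw [(hasDerivAt_QL γ ν η K t hs).deriv, (hasDerivAt_yL γ ν η K t hs).deriv]
  field_simp

lemma yL_add_div_QL_add_mul_exp (γ ν η K t : ℝ) (hs : sin (ν * t) ≠ 0) (hK : K ≠ 0)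
    (hφ : phiPlus γ ν t ≠ 0) :
    (yL γ ν η K t + η) / (QL γ ν η K t + η) * exp (-(2 * γ * t))
      = -(phiMinus γ ν t / phiPlus γ ν t) := by
  have hexp : exp (-(2 * γ * t)) = exp (-(γ * t)) / exp (γ * t) := by
    rw [← exp_sub]; ring_nf
  have hy : yL γ ν η K t + η = K * phiMinus γ ν t * exp (γ * t) / sin (ν * t) := by
    rw [yL]; ring
  have hQ : QL γ ν η K t + η = -(K * phiPlus γ ν t * exp (-(γ * t)) / sin (ν * t)) := by
    rw [QL]; ring
  rw [hy, hQ, hexp]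
  generalize sin (ν * t) = s at *
  field_simp

theorem stmt_17_general (γ ν η K th : ℝ) :
    ∀ t ∈ Set.Ioo (π / ν) th, Real.sin (ν * t) ≠ 0 → QL γ ν η K t ≠ -η →
      deriv (QL γ ν η K) t / deriv (yL γ ν η K) t
        = ((yL γ ν η K t + η) / (QL γ ν η K t + η)) * Real.exp (-(2 * γ * t)) := by
  intro t _ hs hQ
  have hQη : K * phiPlus γ ν t * exp (-(γ * t)) / sin (ν * t) ≠ 0 := by
    contrapose! hQ
    rw [QL, hQ, sub_zero]
  have hK : K ≠ 0 := by rintro rfl; simp at hQη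
  have hφ : phiPlus γ ν t ≠ 0 := by intro h; simp [h] at hQη
  rw [deriv_QL_div_deriv_yL γ ν η K t hs hK hφ, yL_add_div_QL_add_mul_exp γ ν η K t hs hK hφ]

/-- Along the parametrization of the inverse left Poincaré half-return map, for
`t ∈ (π/ν, t̂⁻)` with `sin(νt) ≠ 0` and `Q(t) ≠ -η`, one has
`Q'(t)/y'(t) = ((y(t)+η)/(Q(t)+η)) e^{-2γ₃t}`. -/
theorem stmt_17 (γ ν η K th : ℝ) (hγ : 0 < γ) (hν : 0 < ν) (hK : K ≠ 0)
    (hth : th ∈ Set.Ioo (π / ν) (2 * π / ν)) (hroot : phiPlus γ ν th = 0) :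
    ∀ t ∈ Set.Ioo (π / ν) th, Real.sin (ν * t) ≠ 0 → QL γ ν η K t ≠ -η →
      deriv (QL γ ν η K) t / deriv (yL γ ν η K) t
        = ((yL γ ν η K t + η) / (QL γ ν η K t + η)) * Real.exp (-(2 * γ * t)) :=
  stmt_17_general γ ν η K th
end
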